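/- For every ω ∈ Ω, the group L_ω is level transitive: for each n and any two words u, v of length n over {0,1}, there exists g ∈ L_ω with g(u) = v. -/

import Mathlib

/-!  Common setup: the group `Aut(X*)` of automorphisms of the rooted binary tree,
the Grigorchuk generators `a, b_ω, c_ω, d_ω`, and the subgroups `G_ω`, `L_ω`. -/

/-- Finite words over `X = {0,1}`: vertices of the rooted binary tree. -/
abbrev Word := List Bool

/-- `Aut(X*)`: bijections of the set of words which preserve word length
(hence fix the empty word) and preserve the prefix relation, as a subgroup of the
permutation group of `Word`. -/
def TreeAut : Subgroup (Equiv.Perm Word) where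
  carrier := {g | (∀ w : Word, (g w).length = w.length) ∧
      ∀ u v : Word, u <+: v ↔ g u <+: g v}
  one_mem' := ⟨fun _ => rfl, fun _ _ => Iff.rfl⟩
  mul_mem' := by
    rintro g h ⟨hg1, hg2⟩ ⟨hh1, hh2⟩
    refine ⟨fun w => ?_, fun u v => ?_⟩
    · simpa using (hg1 (h w)).trans (hh1 w)
    · simpa using (hh2 u v).trans (hg2 (h u) (h v))
  inv_mem' := by
    rintro g ⟨hg1, hg2⟩
    refine ⟨fun w => ?_, fun u v => ?_⟩
    · have := hg1 (g⁻¹ w)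
      rw [Equiv.Perm.coe_inv, Equiv.apply_symm_apply] at this
      exact this.symm
    · have := (hg2 (g⁻¹ u) (g⁻¹ v)).symm
      simpa using this

/-- Application of a tree automorphism to a word. -/
def ap (g : ↥TreeAut) (w : Word) : Word := (g : Equiv.Perm Word) w

/-- The root permutation `a` (as a map): `a(0v) = 1v`, `a(1v) = 0v`. -/
def aFun : Word → Word
  | [] => []
  | x :: v => (!x) :: v

/-- The common recursive pattern of the maps `b_ω, c_ω, d_ω`: on `0v` act by the
identity if `ω 0 = k` and by `a` otherwise, on `1v` recurse with the shifted sequence.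
(`k = 2` gives `b`, `k = 1` gives `c`, `k = 0` gives `d`.) -/
def genFun (k : Fin 3) : (ℕ → Fin 3) → Word → Word
  | _, [] => []
  | ω, false :: v => false :: (if ω 0 = k then v else aFun v)
  | ω, true :: v => true :: genFun k (fun n => ω (n + 1)) v

lemma aFun_invol : Function.Involutive aFun := by
  intro w; cases w with
  | nil => rfl
  | cons x v => simp [aFun]

lemma aFun_length : ∀ w : Word, (aFun w).length = w.length := by
  intro w; cases w <;> simp [aFun]

lemma aFun_prefix : ∀ u v : Word, u <+: v → aFun u <+: aFun v := by
  intro u v h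
  cases u with
  | nil => simp [aFun]
  | cons x u' =>
    cases v with
    | nil => simp at h
    | cons y v' =>
      rw [List.cons_prefix_cons] at h
      obtain ⟨rfl, h2⟩ := h
      simpa [aFun, List.cons_prefix_cons] using h2

lemma genFun_length (k : Fin 3) : ∀ (w : Word) (ω : ℕ → Fin 3),
    (genFun k ω w).length = w.length
  | [], _ => rfl
  | false :: v, ω => by
    by_cases h : ω 0 = k <;> simp [genFun, h, aFun_length]
  | true :: v, ω => by
    simp [genFun, genFun_length k v]

lemma genFun_invol (k : Fin 3) : ∀ (w : Word) (ω : ℕ → Fin 3),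
    genFun k ω (genFun k ω w) = w
  | [], _ => rfl
  | false :: v, ω => by
    by_cases h : ω 0 = k <;> simp [genFun, h, aFun_invol v]
  | true :: v, ω => by
    simp [genFun, genFun_invol k v]

lemma genFun_prefix (k : Fin 3) : ∀ (u v : Word) (ω : ℕ → Fin 3),
    u <+: v → genFun k ω u <+: genFun k ω v
  | [], v, ω, _ => by simp [genFun]
  | x :: u', [], ω, h => by simp at h
  | x :: u', y :: v', ω, h => by
    rw [List.cons_prefix_cons] at h
    obtain ⟨rfl, h2⟩ := h
    cases x with
    | false =>
      by_cases h0 : ω 0 = k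
      · simpa [genFun, h0, List.cons_prefix_cons] using h2
      · simpa [genFun, h0, List.cons_prefix_cons] using aFun_prefix u' v' h2
    | true =>
      simpa [genFun, List.cons_prefix_cons] using genFun_prefix k u' v' _ h2

/-- Build an element of `Aut(X*)` from an involutive, length-preserving,
prefix-preserving map. -/
def mkAut (f : Word → Word) (hinv : Function.Involutive f)
    (hlen : ∀ w, (f w).length = w.length)
    (hpre : ∀ u v : Word, u <+: v → f u <+: f v) : ↥TreeAut :=
  ⟨hinv.toPerm, by
    refine ⟨fun w => ?_, fun u v => ⟨fun h => ?_, fun h => ?_⟩⟩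
    · simpa using hlen w
    · simpa using hpre u v h
    · have := hpre _ _ (by simpa using h)
      simpa [hinv u, hinv v] using this⟩

/-- The automorphism `a`. -/
def aAut : ↥TreeAut := mkAut aFun aFun_invol aFun_length aFun_prefix

/-- The automorphism `b_ω`. -/
def bAut (ω : ℕ → Fin 3) : ↥TreeAut :=
  mkAut (genFun 2 ω) (fun w => genFun_invol 2 w ω) (fun w => genFun_length 2 w ω)
    (fun u v h => genFun_prefix 2 u v ω h)

/-- The automorphism `c_ω`. -/
def cAut (ω : ℕ → Fin 3) : ↥TreeAut :=
  mkAut (genFun 1 ω) (fun w => genFun_invol 1 w ω) (fun w => genFun_length 1 w ω)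
    (fun u v h => genFun_prefix 1 u v ω h)

/-- The automorphism `d_ω`. -/
def dAut (ω : ℕ → Fin 3) : ↥TreeAut :=
  mkAut (genFun 0 ω) (fun w => genFun_invol 0 w ω) (fun w => genFun_length 0 w ω)
    (fun u v h => genFun_prefix 0 u v ω h)

/-- `G_ω = ⟨a, b_ω, c_ω, d_ω⟩`. -/
def Ggrp (ω : ℕ → Fin 3) : Subgroup ↥TreeAut :=
  Subgroup.closure {aAut, bAut ω, cAut ω, dAut ω}

/-- `L_ω = ⟨a b_ω, d_ω⟩`. -/
def Lgrp (ω : ℕ → Fin 3) : Subgroup ↥TreeAut :=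
  Subgroup.closure {aAut * bAut ω, dAut ω}

/-- The `n`-fold shift `σⁿω`. -/
def shift (n : ℕ) (ω : ℕ → Fin 3) : ℕ → Fin 3 := fun m => ω (m + n)

/-- `Ω_∞`: sequences in which each of `0, 1, 2` occurs infinitely often. -/
def OmegaInf : Set (ℕ → Fin 3) := {ω | ∀ k : Fin 3, ∀ N : ℕ, ∃ n, N ≤ n ∧ ω n = k}

/-- `g` fixes every word of length `n`. -/
def fixesLevel (g : ↥TreeAut) (n : ℕ) : Prop := ∀ w : Word, w.length = n → ap g w = w

/-- The subgroup of all tree automorphisms acting trivially outside the subtree `uX*`. -/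
def ristSubgroup (u : Word) : Subgroup ↥TreeAut where
  carrier := {g | ∀ w : Word, ¬ u <+: w → ap g w = w}
  one_mem' := by intro w _; rfl
  mul_mem' := by
    intro g h hg hh w hw
    have e1 : ap g w = w := hg w hw
    have e2 : ap h w = w := hh w hw
    simp only [ap] at e1 e2
    show (g : Equiv.Perm Word) ((h : Equiv.Perm Word) w) = w
    rw [e2, e1]
  inv_mem' := by
    intro g hg w hw
    have h1' : ap g w = w := hg w hw
    have h1 : (g : Equiv.Perm Word) w = w := h1'
    show ((g : Equiv.Perm Word))⁻¹ w = w
    conv_lhs => rw [← h1]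
    simp

/-- The subgroup of all tree automorphisms fixing every word of length `n`
(the `n`-th level stabilizer in `Aut(X*)`). -/
def levelStab (n : ℕ) : Subgroup ↥TreeAut where
  carrier := {g | fixesLevel g n}
  one_mem' := by intro w _; rfl
  mul_mem' := by
    intro g h hg hh w hw
    have e1 : ap g w = w := hg w hw
    have e2 : ap h w = w := hh w hw
    simp only [ap] at e1 e2
    show (g : Equiv.Perm Word) ((h : Equiv.Perm Word) w) = w
    rw [e2, e1]
  inv_mem' := by
    intro g hg w hw
    have h1' : ap g w = w := hg w hw
    have h1 : (g : Equiv.Perm Word) w = w := h1'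
    show ((g : Equiv.Perm Word))⁻¹ w = w
    conv_lhs => rw [← h1]
    simp

/-- The rigid level stabilizer `Rist_G(n)`: the subgroup generated by the rigid vertex
stabilizers `Rist_G(u) = G ⊓ ristSubgroup u` over all words `u` of length `n`. -/
def ristLevel (G : Subgroup ↥TreeAut) (n : ℕ) : Subgroup ↥TreeAut :=
  ⨆ u ∈ {u : Word | u.length = n}, G ⊓ ristSubgroup u

/-- `G` acts transitively on each level of the tree. -/
def LevelTransitive (G : Subgroup ↥TreeAut) : Prop :=
  ∀ u v : Word, u.length = v.length → ∃ g ∈ G, ap g u = v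

/-- A set of tree automorphisms acts level transitively on the subtree `vX*`. -/
def LevelTransitiveOn (S : Set ↥TreeAut) (v : Word) : Prop :=
  ∀ u₁ u₂ : Word, u₁.length = u₂.length → ∃ g ∈ S, ap g (v ++ u₁) = v ++ u₂

/-- `L_{n,ω}`: `L_{0,ω} = L_ω` and `L_{n,ω}` is generated by the squares of
elements of `L_{n-1,ω}`. -/
def Lsq (ω : ℕ → Fin 3) : ℕ → Subgroup ↥TreeAut
  | 0 => Lgrp ω
  | n + 1 => Subgroup.closure {x | ∃ y ∈ Lsq ω n, x = y * y}

/-- `g` is active at the word `v`: the section `g_v` acts nontrivially on the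
one-letter words. -/
def IsActive (g : ↥TreeAut) (v : Word) : Prop :=
  ap g (v ++ [false]) ≠ ap g v ++ [false]

open scoped Classical in
/-- `p(g)_n`: the number of words of length `n` at which `g` is active, mod 2
(words of length `n` are enumerated as `List.ofFn f` for `f : Fin n → Bool`). -/
noncomputable def pMap (g : ↥TreeAut) (n : ℕ) : ZMod 2 :=
  (((Finset.univ : Finset (Fin n → Bool)).filter
    (fun f => IsActive g (List.ofFn f))).card : ZMod 2)

/-!
Conjugating by `a b_ω` moves any word into the subtree `1X*`, so it suffices that the sections
at `1` of the elements of `L_ω` fixing `1` act transitively on each level. These sections contain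
both generators of `L_{σω}`: `d_ω` itself restricts to `d_{σω}`, and `a b_{σω}` is the section of
`(a b_ω)²` or of `a b_ω d_ω a b_ω`, depending on `ω_1`. Induction on the level, over all `ω`
at once, finishes the proof.
-/

lemma ap_mul (g h : ↥TreeAut) (w : Word) : ap (g * h) w = ap g (ap h w) := rfl

@[simp]
lemma ap_inv_ap (g : ↥TreeAut) (w : Word) : ap g⁻¹ (ap g w) = w := by
  simp [ap]

lemma ap_length (g : ↥TreeAut) (w : Word) : (ap g w).length = w.length := g.2.1 w

lemma exists_ap_append (g : ↥TreeAut) (u w : Word) :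
    ∃ w', ap g (u ++ w) = ap g u ++ w' := by
  obtain ⟨w', hw'⟩ := (g.2.2 u (u ++ w)).1 (List.prefix_append u w)
  exact ⟨w', hw'.symm⟩

lemma ap_aAut (w : Word) : ap aAut w = aFun w := rfl

lemma ap_bAut (ω : ℕ → Fin 3) (w : Word) : ap (bAut ω) w = genFun 2 ω w := rfl

lemma ap_dAut (ω : ℕ → Fin 3) (w : Word) : ap (dAut ω) w = genFun 0 ω w := rfl

lemma aFun_cons (x : Bool) (v : Word) : aFun (x :: v) = (!x) :: v := rfl

lemma genFun_false_cons (k : Fin 3) (ω : ℕ → Fin 3) (v : Word) :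
    genFun k ω (false :: v) = false :: (if ω 0 = k then v else aFun v) := rfl

lemma genFun_true_cons (k : Fin 3) (ω : ℕ → Fin 3) (v : Word) :
    genFun k ω (true :: v) = true :: genFun k (shift 1 ω) v := rfl

/-- The image `φ_x(St_G(x))` of the stabilizer of the vertex `x` under the section map. -/
def sectionGroup (G : Subgroup ↥TreeAut) (x : Bool) : Subgroup ↥TreeAut where
  carrier := {h | ∃ g ∈ G, ∀ w, ap g (x :: w) = x :: ap h w}
  one_mem' := ⟨1, G.one_mem, fun _ => rfl⟩
  mul_mem' := by
    rintro h₁ h₂ ⟨g₁, hg₁, e₁⟩ ⟨g₂, hg₂, e₂⟩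
    exact ⟨g₁ * g₂, G.mul_mem hg₁ hg₂, fun w => by rw [ap_mul, e₂, e₁, ap_mul]⟩
  inv_mem' := by
    rintro h ⟨g, hg, e⟩
    refine ⟨g⁻¹, G.inv_mem hg, fun w => ?_⟩
    have hw : ap h (ap h⁻¹ w) = w := by simpa using ap_inv_ap h⁻¹ w
    rw [← hw, ← e, ap_inv_ap, hw]

def TransitiveOnLevel (G : Subgroup ↥TreeAut) (n : ℕ) : Prop :=
  ∀ u v : Word, u.length = n → v.length = n → ∃ g ∈ G, ap g u = v

lemma TransitiveOnLevel.mono {G H : Subgroup ↥TreeAut} (hGH : G ≤ H) {n : ℕ}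
    (hG : TransitiveOnLevel G n) : TransitiveOnLevel H n := fun u v hu hv =>
  let ⟨g, hg, e⟩ := hG u v hu hv
  ⟨g, hGH hg, e⟩

lemma exists_ap_cons_eq_true_cons {G : Subgroup ↥TreeAut}
    (hroot : ∃ g ∈ G, ap g [false] = [true]) (x : Bool) (w : Word) :
    ∃ g ∈ G, ∃ w', ap g (x :: w) = true :: w' := by
  cases x with
  | true => exact ⟨1, G.one_mem, w, rfl⟩
  | false =>
    obtain ⟨g, hg, e⟩ := hroot
    obtain ⟨w', hw'⟩ := exists_ap_append g [false] w
    exact ⟨g, hg, w', by rwa [e] at hw'⟩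

/-- Move both words into the subtree `1X*` and connect them there. -/
lemma transitiveOnLevel_succ {G : Subgroup ↥TreeAut} {n : ℕ}
    (hroot : ∃ g ∈ G, ap g [false] = [true])
    (hsec : TransitiveOnLevel (sectionGroup G true) n) : TransitiveOnLevel G (n + 1) := by
  rintro (_ | ⟨x, u⟩) (_ | ⟨y, v⟩) hu hv
  · simp at hu
  · simp at hu
  · simp at hv
  obtain ⟨gu, hgu, u', eu⟩ := exists_ap_cons_eq_true_cons hroot x u
  obtain ⟨gv, hgv, v', ev⟩ := exists_ap_cons_eq_true_cons hroot y v
  have hu' : u'.length = n := by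
    simpa [ap_length, hu] using (congrArg List.length eu).symm
  have hv' : v'.length = n := by
    simpa [ap_length, hv] using (congrArg List.length ev).symm
  obtain ⟨h, ⟨g, hg, eg⟩, eh⟩ := hsec u' v' hu' hv'
  refine ⟨gv⁻¹ * g * gu, mul_mem (mul_mem (inv_mem hgv) hg) hgu, ?_⟩
  rw [ap_mul, ap_mul, eu, eg, eh, ← ev, ap_inv_ap]

lemma aAut_mul_bAut_mem (ω : ℕ → Fin 3) : aAut * bAut ω ∈ Lgrp ω :=
  Subgroup.subset_closure (by simp)

lemma dAut_mem (ω : ℕ → Fin 3) : dAut ω ∈ Lgrp ω :=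
  Subgroup.subset_closure (by simp)

lemma ap_aAut_mul_bAut_false (ω : ℕ → Fin 3) : ap (aAut * bAut ω) [false] = [true] := by
  by_cases h : ω 0 = 2 <;> simp [ap_mul, ap_aAut, ap_bAut, genFun_false_cons, aFun, h]

/-- `(a b_ω)²` acts on `1X*` as `1 · β(ω 0) b_{σω}`, which is `a b_{σω}` unless `ω 0 = 2`; in that
case `d_ω` supplies the missing `a`, since `δ(2) = a`. -/
lemma aAut_mul_bAut_shift_mem_sectionGroup (ω : ℕ → Fin 3) :
    aAut * bAut (shift 1 ω) ∈ sectionGroup (Lgrp ω) true := by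
  have ht := aAut_mul_bAut_mem ω
  by_cases h2 : ω 0 = 2
  · refine ⟨aAut * bAut ω * dAut ω * (aAut * bAut ω),
      mul_mem (mul_mem ht (dAut_mem ω)) ht, fun w => ?_⟩
    simp [ap_mul, ap_aAut, ap_bAut, ap_dAut, genFun_false_cons, genFun_true_cons,
      aFun_cons, h2]
  · refine ⟨aAut * bAut ω * (aAut * bAut ω), mul_mem ht ht, fun w => ?_⟩
    simp [ap_mul, ap_aAut, ap_bAut, genFun_false_cons, genFun_true_cons, aFun_cons, h2]

lemma dAut_shift_mem_sectionGroup (ω : ℕ → Fin 3) :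
    dAut (shift 1 ω) ∈ sectionGroup (Lgrp ω) true :=
  ⟨dAut ω, dAut_mem ω, fun _ => rfl⟩

lemma Lgrp_shift_le_sectionGroup (ω : ℕ → Fin 3) :
    Lgrp (shift 1 ω) ≤ sectionGroup (Lgrp ω) true := by
  rw [Lgrp, Subgroup.closure_le]
  rintro g (rfl | rfl)
  · exact aAut_mul_bAut_shift_mem_sectionGroup ω
  · exact dAut_shift_mem_sectionGroup ω

lemma transitiveOnLevel_Lgrp (n : ℕ) : ∀ ω, TransitiveOnLevel (Lgrp ω) n := by
  induction n with
  | zero =>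
    intro ω u v hu hv
    rw [List.length_eq_zero_iff] at hu hv
    exact ⟨1, one_mem _, by rw [hu, hv]; rfl⟩
  | succ n ih =>
    intro ω
    exact transitiveOnLevel_succ ⟨_, aAut_mul_bAut_mem ω, ap_aAut_mul_bAut_false ω⟩
      ((ih (shift 1 ω)).mono (Lgrp_shift_le_sectionGroup ω))

/-- for every `ω ∈ Ω`, the group `L_ω` is level transitive. -/
theorem statement3 (ω : ℕ → Fin 3) : LevelTransitive (Lgrp ω) := fun u v huv =>
  transitiveOnLevel_Lgrp u.length ω u v rfl huv.symm
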